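/- arXiv:2108.09046 — 2 statements merged into one kernel-verified Lean document; each statement's English description precedes it below -/
import Mathlib

section
/- For every integer n ≥ 1 and every x ≥ 0 one has S_n(0) = 1, S_n(x) ≥ 0 and S_n(x) ≤ e^x; moreover S_{n+1} is differentiable and S_{n+1}'(x) = S_n(x)/(1 + G_{n+1}(x))² for all x ≥ 0. -/
/-!
Peeling off the last coordinate of the simplex (Fubini) gives the recursion
`G^{+,m}_{i+1}(x) = ∫_0^x G^{+,m}_i(t) (1 + G_{m+i}(t))⁻² dt`. So each `G^{+,m}_{i+1}` is a
primitive of a function continuous on `[0, ∞)`, and `S_{n+1} = 1 + Σ_{i<n} G^{+,n+1-i}_{i+1}`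
differentiates termwise to `S_n / (1 + G_{n+1})²`, because the weight index `(n+1-i) + i` is
`n + 1` in every term. As the weights take values in `[0, 1]` on `[0, ∞)`, the same recursion
gives `0 ≤ G^{+,m}_i(x) ≤ x^i / i!`, and summing over `i < n` bounds `S_n(x)` by `e^x`.
-/

/-- The functions `G_j` from the paper: `G_2 ≡ 0` and, for `j ≥ 3`,
`G_j(x) = ∫_0^x dy / (1 + G_{j-1}(y))`. (Values for `j = 0, 1` are irrelevant.) -/
noncomputable def G : ℕ → ℝ → ℝ
  | 0, _ => 0
  | 1, _ => 0
  | 2, _ => 0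
  | j + 3, x => ∫ y in (0:ℝ)..x, 1 / (1 + G (j + 2) y)

/-- `G^{+,m}_i(x) = ∫_{Δ_x^i} ∏_{ℓ=0}^{i-1} (1 + G_{m+ℓ}(x_ℓ))^{-2} dx_0 ⋯ dx_{i-1}`,
the integral over the simplex `{0 ≤ x_0 ≤ ⋯ ≤ x_{i-1} ≤ x}`; for `i = 0` it equals `1`. -/
noncomputable def Gplus (m i : ℕ) (x : ℝ) : ℝ :=
  ∫ v : Fin i → ℝ,
    Set.indicator {v : Fin i → ℝ | Monotone v ∧ ∀ l, v l ∈ Set.Icc 0 x}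
      (fun v => ∏ l : Fin i, ((1 + G (m + (l : ℕ)) (v l)) ^ 2)⁻¹) v

/-- `S_n(x) = Σ_{j=1}^n G^{+,n+2-j}_{j-1}(x)`. -/
noncomputable def S (n : ℕ) (x : ℝ) : ℝ :=
  ∑ j ∈ Finset.Icc 1 n, Gplus (n + 2 - j) (j - 1) x

open MeasureTheory Set

lemma integral_fin_snoc {E : Type*} [NormedAddCommGroup E] [NormedSpace ℝ E] {i : ℕ}
    {F : (Fin (i + 1) → ℝ) → E} (hF : Integrable F) :
    ∫ v, F v = ∫ t, ∫ w : Fin i → ℝ, F (Fin.snoc w t) := by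
  set e := MeasurableEquiv.piFinSuccAbove (fun _ : Fin (i + 1) => ℝ) (Fin.last i)
  have he : MeasurePreserving e.symm :=
    (volume_preserving_piFinSuccAbove (fun _ : Fin (i + 1) => ℝ) (Fin.last i)).symm
  have he_apply : ∀ p : ℝ × (Fin i → ℝ), e.symm p = Fin.snoc p.2 p.1 := fun p => by
    simp [e, MeasurableEquiv.piFinSuccAbove_symm_apply, Fin.insertNthEquiv, Fin.insertNth_last']
  have hFe : Integrable (F ∘ e.symm) (volume.prod volume) :=
    (he.integrable_comp_emb e.symm.measurableEmbedding).2 hF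
  rw [← he.integral_comp e.symm.measurableEmbedding, Measure.volume_eq_prod,
    ← Function.comp_def F, integral_prod _ hFe]
  simp only [Function.comp_apply, he_apply]

lemma hasDerivWithinAt_integral_Ici {g : ℝ → ℝ} (hg : ContinuousOn g (Ici 0)) {x : ℝ}
    (hx : 0 ≤ x) : HasDerivWithinAt (fun u => ∫ t in (0:ℝ)..u, g t) (g x) (Ici 0) x := by
  set g' : ℝ → ℝ := fun t => g (max t 0)
  have hg' : Continuous g' := hg.comp_continuous (continuous_id.max continuous_const)
    fun t => le_max_right t 0
  have hprim : ∀ u ∈ Ici (0:ℝ), ∫ t in (0:ℝ)..u, g t = ∫ t in (0:ℝ)..u, g' t := by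
    intro u hu
    refine intervalIntegral.integral_congr fun t ht => ?_
    rw [uIcc_of_le hu] at ht
    simp only [g', max_eq_left ht.1]
  have hderiv := (hg'.integral_hasStrictDerivAt 0 x).hasDerivAt.hasDerivWithinAt (s := Ici 0)
  simp only [g', max_eq_left hx] at hderiv
  exact hderiv.congr hprim (hprim x hx)

lemma continuousOn_integral_Ici {g : ℝ → ℝ} (hg : ContinuousOn g (Ici 0)) :
    ContinuousOn (fun u => ∫ t in (0:ℝ)..u, g t) (Ici 0) := fun _ hx =>
  (hasDerivWithinAt_integral_Ici hg hx).continuousWithinAt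

lemma G_add_three (j : ℕ) : G (j + 3) = fun x => ∫ y in (0:ℝ)..x, 1 / (1 + G (j + 2) y) := by
  ext x; rw [G]

lemma G_nonneg : ∀ (j : ℕ) {x : ℝ}, 0 ≤ x → 0 ≤ G j x
  | 0, _, _ | 1, _, _ | 2, _, _ => by simp [G]
  | j + 3, x, hx => by
    rw [G_add_three]
    exact intervalIntegral.integral_nonneg hx fun y hy => by
      have := G_nonneg (j + 2) hy.1
      positivity

lemma continuousOn_G : ∀ j : ℕ, ContinuousOn (G j) (Ici 0)
  | 0 | 1 | 2 => by simp only [G]; exact continuousOn_const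
  | j + 3 => by
    rw [G_add_three]
    refine continuousOn_integral_Ici (continuousOn_const.div
      (continuousOn_const.add (continuousOn_G (j + 2))) fun y hy => ?_)
    have := G_nonneg (j + 2) hy
    positivity

lemma Fin.monotone_snoc_iff {α : Type*} [Preorder α] {i : ℕ} {w : Fin i → α} {t : α} :
    Monotone (Fin.snoc w t : Fin (i + 1) → α) ↔ Monotone w ∧ ∀ l, w l ≤ t := by
  constructor
  · intro h
    refine ⟨fun a b hab => ?_, fun l => ?_⟩
    · simpa using h (a := a.castSucc) (b := b.castSucc) (by simpa using hab)
    · simpa using h (a := l.castSucc) (b := Fin.last i) (Fin.le_last _)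
  · rintro ⟨hw, hle⟩ a b hab
    induction b using Fin.lastCases with
    | last =>
      induction a using Fin.lastCases with
      | last => simp
      | cast a => simpa using hle a
    | cast b =>
      induction a using Fin.lastCases with
      | last => exact absurd hab (Fin.castSucc_lt_last b).not_ge
      | cast a => simpa using hw (by simpa using hab)

def orderedSimplex (i : ℕ) (x : ℝ) : Set (Fin i → ℝ) :=
  {v | Monotone v ∧ ∀ l, v l ∈ Icc 0 x}

lemma snoc_mem_orderedSimplex_iff {i : ℕ} {x t : ℝ} {w : Fin i → ℝ} :
    (Fin.snoc w t : Fin (i + 1) → ℝ) ∈ orderedSimplex (i + 1) x ↔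
      t ∈ Icc 0 x ∧ w ∈ orderedSimplex i t := by
  simp only [orderedSimplex, mem_ofPred_eq, Fin.monotone_snoc_iff, Fin.forall_fin_succ',
    Fin.snoc_castSucc, Fin.snoc_last, mem_Icc]
  constructor
  · rintro ⟨⟨hw, hle⟩, hcc, ht⟩
    exact ⟨ht, hw, fun l => ⟨(hcc l).1, hle l⟩⟩
  · rintro ⟨ht, hw, hcc⟩
    exact ⟨⟨hw, fun l => (hcc l).2⟩, fun l => ⟨(hcc l).1, (hcc l).2.trans ht.2⟩, ht⟩

lemma isCompact_orderedSimplex (i : ℕ) (x : ℝ) : IsCompact (orderedSimplex i x) := by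
  have hmono : IsClosed {v : Fin i → ℝ | Monotone v} := by
    simp only [Monotone, ofPred_forall]
    exact isClosed_iInter fun a => isClosed_iInter fun b => isClosed_iInter fun _ =>
      isClosed_le (continuous_apply a) (continuous_apply b)
  have hbox : IsClosed {v : Fin i → ℝ | ∀ l, v l ∈ Icc 0 x} := by
    simp only [ofPred_forall]
    exact isClosed_iInter fun l => isClosed_Icc.preimage (continuous_apply l)
  exact (isCompact_univ_pi fun _ => isCompact_Icc).of_isClosed_subset (hmono.inter hbox)
    fun v hv l _ => hv.2 l

section SimplexIntegral

variable (f : ℕ → ℝ → ℝ)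

def simplexIntegrand (i : ℕ) (v : Fin i → ℝ) : ℝ := ∏ l : Fin i, f l (v l)

noncomputable def simplexIntegral (i : ℕ) (x : ℝ) : ℝ :=
  ∫ v : Fin i → ℝ, (orderedSimplex i x).indicator (simplexIntegrand f i) v

lemma simplexIntegral_zero (x : ℝ) : simplexIntegral f 0 x = 1 := by
  have hsimplex : orderedSimplex 0 x = univ :=
    eq_univ_of_forall fun v => ⟨Subsingleton.monotone v, finZeroElim⟩
  simp [simplexIntegral, simplexIntegrand, hsimplex, Measure.real,
    Measure.volume_pi_eq_dirac (α := fun _ : Fin 0 => ℝ)]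

variable {f}

lemma simplexIntegral_nonneg (hf : ∀ l t, 0 ≤ f l t) (i : ℕ) (x : ℝ) :
    0 ≤ simplexIntegral f i x :=
  integral_nonneg <| indicator_nonneg fun v _ => Finset.prod_nonneg fun l _ => hf l (v l)

lemma integrable_indicator_simplexIntegrand (hf : ∀ l, ContinuousOn (f l) (Ici 0)) (i : ℕ)
    (x : ℝ) : Integrable ((orderedSimplex i x).indicator (simplexIntegrand f i)) := by
  have hK := isCompact_orderedSimplex i x
  refine (integrable_indicator_iff hK.isClosed.measurableSet).2 <|
    ContinuousOn.integrableOn_compact hK ?_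
  exact continuousOn_finsetProd _ fun l _ =>
    (hf l).comp (continuous_apply l).continuousOn fun v hv => (hv.2 l).1

lemma simplexIntegrand_snoc {i : ℕ} (w : Fin i → ℝ) (t : ℝ) :
    simplexIntegrand f (i + 1) (Fin.snoc w t) = simplexIntegrand f i w * f i t := by
  simp [simplexIntegrand, Fin.prod_univ_castSucc]

lemma indicator_simplexIntegrand_snoc {i : ℕ} (x t : ℝ) (w : Fin i → ℝ) :
    (orderedSimplex (i + 1) x).indicator (simplexIntegrand f (i + 1)) (Fin.snoc w t) =
      (Icc 0 x).indicator
        (fun t => (orderedSimplex i t).indicator (simplexIntegrand f i) w * f i t) t := by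
  by_cases ht : t ∈ Icc 0 x
  · by_cases hw : w ∈ orderedSimplex i t
    · rw [indicator_of_mem (snoc_mem_orderedSimplex_iff.2 ⟨ht, hw⟩), indicator_of_mem ht,
        indicator_of_mem hw, simplexIntegrand_snoc]
    · rw [indicator_of_notMem fun h => hw (snoc_mem_orderedSimplex_iff.1 h).2,
        indicator_of_mem ht, indicator_of_notMem hw, zero_mul]
  · rw [indicator_of_notMem fun h => ht (snoc_mem_orderedSimplex_iff.1 h).1,
      indicator_of_notMem ht]

lemma simplexIntegral_succ (hf : ∀ l, ContinuousOn (f l) (Ici 0)) (i : ℕ) {x : ℝ}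
    (hx : 0 ≤ x) :
    simplexIntegral f (i + 1) x = ∫ t in (0:ℝ)..x, simplexIntegral f i t * f i t := by
  have hslice : ∀ t, ∫ w, (orderedSimplex (i + 1) x).indicator (simplexIntegrand f (i + 1))
      (Fin.snoc w t) = (Icc 0 x).indicator (fun t => simplexIntegral f i t * f i t) t := by
    intro t
    simp only [indicator_simplexIntegrand_snoc]
    by_cases ht : t ∈ Icc 0 x
    · simp only [indicator_of_mem ht, integral_mul_const, simplexIntegral]
    · simp only [indicator_of_notMem ht, integral_zero]
  rw [simplexIntegral, integral_fin_snoc (integrable_indicator_simplexIntegrand hf _ _)]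
  simp only [hslice]
  rw [integral_indicator measurableSet_Icc, integral_Icc_eq_integral_Ioc,
    ← intervalIntegral.integral_of_le hx]

lemma simplexIntegral_succ_zero (hf : ∀ l, ContinuousOn (f l) (Ici 0)) (i : ℕ) :
    simplexIntegral f (i + 1) 0 = 0 := by
  rw [simplexIntegral_succ hf i le_rfl, intervalIntegral.integral_same]

lemma continuousOn_simplexIntegral (hf : ∀ l, ContinuousOn (f l) (Ici 0)) :
    ∀ i, ContinuousOn (simplexIntegral f i) (Ici 0)
  | 0 => continuousOn_const.congr fun x _ => simplexIntegral_zero f x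
  | i + 1 => (continuousOn_integral_Ici ((continuousOn_simplexIntegral hf i).mul (hf i))).congr
      fun _ hx => simplexIntegral_succ hf i hx

lemma hasDerivWithinAt_simplexIntegral_succ (hf : ∀ l, ContinuousOn (f l) (Ici 0)) (i : ℕ)
    {x : ℝ} (hx : 0 ≤ x) :
    HasDerivWithinAt (simplexIntegral f (i + 1)) (simplexIntegral f i x * f i x) (Ici 0) x :=
  (hasDerivWithinAt_integral_Ici ((continuousOn_simplexIntegral hf i).mul (hf i)) hx).congr
    (fun _ hy => simplexIntegral_succ hf i hy) (simplexIntegral_succ hf i hx)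

lemma simplexIntegral_le_pow_div_factorial (hf : ∀ l, ContinuousOn (f l) (Ici 0))
    (hf₀ : ∀ l t, 0 ≤ f l t) (hf₁ : ∀ l t, 0 ≤ t → f l t ≤ 1) :
    ∀ (i : ℕ) {x : ℝ}, 0 ≤ x → simplexIntegral f i x ≤ x ^ i / i.factorial
  | 0, x, _ => by simp [simplexIntegral_zero]
  | i + 1, x, hx => by
    have hint : IntervalIntegrable (fun t => simplexIntegral f i t * f i t) volume 0 x :=
      ContinuousOn.intervalIntegrable <| ((continuousOn_simplexIntegral hf i).mul (hf i)).mono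
        (by simp [uIcc_of_le hx, Icc_subset_Ici_self])
    calc simplexIntegral f (i + 1) x = ∫ t in (0:ℝ)..x, simplexIntegral f i t * f i t :=
          simplexIntegral_succ hf i hx
      _ ≤ ∫ t in (0:ℝ)..x, t ^ i / i.factorial :=
          intervalIntegral.integral_mono_on hx hint
            (((continuous_pow i).div_const _).intervalIntegrable 0 x) fun t ht =>
            (mul_le_of_le_one_right (simplexIntegral_nonneg hf₀ i t) (hf₁ i t ht.1)).trans
              (simplexIntegral_le_pow_div_factorial hf hf₀ hf₁ i ht.1)
      _ = x ^ (i + 1) / (i + 1).factorial := by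
          rw [intervalIntegral.integral_div, integral_pow, Nat.factorial_succ]
          push_cast
          field_simp
          ring

end SimplexIntegral

-- `Gplus m` is definitionally `simplexIntegral (GplusWeight m)`; the `Gplus` lemmas rely on this.
noncomputable def GplusWeight (m l : ℕ) (t : ℝ) : ℝ := ((1 + G (m + l) t) ^ 2)⁻¹

lemma continuousOn_GplusWeight (m l : ℕ) : ContinuousOn (GplusWeight m l) (Ici 0) :=
  ((continuousOn_const.add (continuousOn_G (m + l))).pow 2).inv₀ fun _ ht =>
    pow_ne_zero 2 (add_pos_of_pos_of_nonneg one_pos (G_nonneg (m + l) ht)).ne'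

lemma GplusWeight_nonneg (m l : ℕ) (t : ℝ) : 0 ≤ GplusWeight m l t :=
  inv_nonneg.2 (sq_nonneg _)

lemma GplusWeight_le_one (m l : ℕ) {t : ℝ} (ht : 0 ≤ t) : GplusWeight m l t ≤ 1 :=
  inv_le_one_of_one_le₀ <| one_le_pow₀ (le_add_of_nonneg_right (G_nonneg (m + l) ht))

lemma Gplus_zero (m : ℕ) (x : ℝ) : Gplus m 0 x = 1 := simplexIntegral_zero (GplusWeight m) x

lemma Gplus_succ_zero (m i : ℕ) : Gplus m (i + 1) 0 = 0 :=
  simplexIntegral_succ_zero (continuousOn_GplusWeight m) i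

lemma Gplus_nonneg (m i : ℕ) (x : ℝ) : 0 ≤ Gplus m i x :=
  simplexIntegral_nonneg (GplusWeight_nonneg m) i x

lemma Gplus_le_pow_div_factorial (m i : ℕ) {x : ℝ} (hx : 0 ≤ x) :
    Gplus m i x ≤ x ^ i / i.factorial :=
  simplexIntegral_le_pow_div_factorial (continuousOn_GplusWeight m) (GplusWeight_nonneg m)
    (fun l _ => GplusWeight_le_one m l) i hx

lemma hasDerivWithinAt_Gplus_succ (m i : ℕ) {x : ℝ} (hx : 0 ≤ x) :
    HasDerivWithinAt (Gplus m (i + 1)) (Gplus m i x * ((1 + G (m + i) x) ^ 2)⁻¹) (Ici 0) x :=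
  hasDerivWithinAt_simplexIntegral_succ (continuousOn_GplusWeight m) i hx

lemma S_eq_sum_range (n : ℕ) (x : ℝ) :
    S n x = ∑ i ∈ Finset.range n, Gplus (n + 1 - i) i x := by
  simp only [S, ← Finset.Ico_add_one_right_eq_Icc, Finset.sum_Ico_eq_sum_range,
    Nat.add_sub_cancel, Nat.add_sub_cancel_left]
  refine Finset.sum_congr rfl fun i _ => ?_
  congr 1
  omega

lemma S_succ (n : ℕ) :
    S (n + 1) = fun x => ∑ i ∈ Finset.range n, Gplus (n + 1 - i) (i + 1) x + 1 := by
  ext x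
  simp only [S_eq_sum_range, Finset.sum_range_succ', Gplus_zero, Nat.add_sub_add_right]

lemma S_apply_zero {n : ℕ} (hn : 1 ≤ n) : S n 0 = 1 := by
  obtain ⟨k, rfl⟩ := Nat.exists_eq_add_of_le' hn
  simp [S_succ, Gplus_succ_zero]

lemma S_nonneg (n : ℕ) (x : ℝ) : 0 ≤ S n x :=
  Finset.sum_nonneg fun _ _ => Gplus_nonneg _ _ x

lemma S_le_exp (n : ℕ) {x : ℝ} (hx : 0 ≤ x) : S n x ≤ Real.exp x :=
  calc S n x = ∑ i ∈ Finset.range n, Gplus (n + 1 - i) i x := S_eq_sum_range n x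
    _ ≤ ∑ i ∈ Finset.range n, x ^ i / i.factorial :=
      Finset.sum_le_sum fun i _ => Gplus_le_pow_div_factorial _ i hx
    _ ≤ Real.exp x := Real.sum_le_exp_of_nonneg hx n

lemma hasDerivWithinAt_S_succ (n : ℕ) {x : ℝ} (hx : 0 ≤ x) :
    HasDerivWithinAt (S (n + 1)) (S n x / (1 + G (n + 1) x) ^ 2) (Ici 0) x := by
  have hterm : ∀ i ∈ Finset.range n, HasDerivWithinAt (Gplus (n + 1 - i) (i + 1))
      (Gplus (n + 1 - i) i x * ((1 + G (n + 1) x) ^ 2)⁻¹) (Ici 0) x := fun i hi => by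
    have hi : i ≤ n + 1 := by rw [Finset.mem_range] at hi; omega
    simpa only [Nat.sub_add_cancel hi] using hasDerivWithinAt_Gplus_succ (n + 1 - i) i hx
  rw [S_succ, S_eq_sum_range, div_eq_mul_inv, Finset.sum_mul]
  exact (HasDerivWithinAt.fun_sum hterm).add_const 1

theorem stmt5 (n : ℕ) (hn : 1 ≤ n) :
    S n 0 = 1 ∧
    (∀ x ∈ Set.Ici (0:ℝ), 0 ≤ S n x ∧ S n x ≤ Real.exp x) ∧
    (∀ x ∈ Set.Ici (0:ℝ),
      HasDerivWithinAt (S (n + 1)) (S n x / (1 + G (n + 1) x) ^ 2) (Set.Ici 0) x) :=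
  ⟨S_apply_zero hn, fun x hx => ⟨S_nonneg n x, S_le_exp n hx⟩,
    fun _ hx => hasDerivWithinAt_S_succ n hx⟩
end

section
/- There is a universal constant C such that for all x, k ∈ ℝ² with x ≠ 0, x ≠ k and |k − x| > |k|/2, one has | c(x, k−x)²/(|x|²·|k−x|²) − c(x, −x)²/|x|⁴ | ≤ C·|k|/|k−x|. -/
/-- Euclidean norm `|x|` on `ℝ²`. -/
noncomputable def R2norm (x : ℝ × ℝ) : ℝ := Real.sqrt (x.1 ^ 2 + x.2 ^ 2)

/-- `c(x,y) = x₂ y₂ − x₁ y₁`. -/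
noncomputable def cfun (x y : ℝ × ℝ) : ℝ := x.2 * y.2 - x.1 * y.1

/-!
Write a = |x|, b = |k − x|, s = c(x, k), t = c(x, x); then c(x, k − x) = s − t and
c(x, −x)² = t². Identifying ℝ² with ℂ, c(x, y) = −Re(x y), so |s| ≤ a|k| and |t| ≤ a².
The difference splits as s(s − 2t)/(a²b²) + (t/a²)²·(a² − b²)/b², and the triangle inequality
|a − b| ≤ |k| together with |k| < 2b bounds the two terms by 8|k|/b and 4|k|/b.
-/

open Complex

lemma R2norm_eq_norm (x : ℝ × ℝ) : R2norm x = ‖equivRealProdCLM.symm x‖ := by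
  simp [R2norm, equivRealProdCLM_symm_apply, norm_def, normSq_apply, sq]

lemma R2norm_nonneg (x : ℝ × ℝ) : 0 ≤ R2norm x := Real.sqrt_nonneg _

lemma R2norm_pos {x : ℝ × ℝ} (hx : x ≠ 0) : 0 < R2norm x := by
  simpa [R2norm_eq_norm] using hx

lemma R2norm_sub_comm (x y : ℝ × ℝ) : R2norm (x - y) = R2norm (y - x) := by
  simp only [R2norm_eq_norm, map_sub, norm_sub_rev]

lemma abs_R2norm_sub_R2norm_le (x y : ℝ × ℝ) : |R2norm x - R2norm y| ≤ R2norm (x - y) := by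
  simpa only [R2norm_eq_norm, map_sub] using abs_norm_sub_norm_le _ _

lemma cfun_eq_neg_re_mul (x y : ℝ × ℝ) :
    cfun x y = -(equivRealProdCLM.symm x * equivRealProdCLM.symm y).re := by
  simp [cfun, equivRealProdCLM_symm_apply]

lemma abs_cfun_le (x y : ℝ × ℝ) : |cfun x y| ≤ R2norm x * R2norm y := by
  rw [cfun_eq_neg_re_mul, abs_neg, R2norm_eq_norm, R2norm_eq_norm, ← norm_mul]
  exact abs_re_le_norm _

lemma cfun_sub_right (x y z : ℝ × ℝ) : cfun x (y - z) = cfun x y - cfun x z := by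
  simp only [cfun, Prod.fst_sub, Prod.snd_sub]
  ring

lemma cfun_neg_right (x y : ℝ × ℝ) : cfun x (-y) = -cfun x y := by
  simp only [cfun, Prod.fst_neg, Prod.snd_neg]
  ring

lemma abs_sq_div_sub_sq_div_le {s c a b K : ℝ} (ha : 0 < a) (hb : 0 < b) (hs : |s| ≤ a * K)
    (hc : |c| ≤ a ^ 2) (hab : |a - b| ≤ K) (hKb : K < 2 * b) :
    |(s - c) ^ 2 / (a ^ 2 * b ^ 2) - c ^ 2 / a ^ 4| ≤ 12 * K / b := by
  have hK : 0 ≤ K := (abs_nonneg _).trans hab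
  have hab' : a ≤ b + K := by linarith [le_abs_self (a - b)]
  have split : (s - c) ^ 2 / (a ^ 2 * b ^ 2) - c ^ 2 / a ^ 4 =
      s * (s - 2 * c) / (a ^ 2 * b ^ 2) + (c / a ^ 2) ^ 2 * ((a - b) * (a + b) / b ^ 2) := by
    field_simp
    ring
  have hfirst : |s * (s - 2 * c) / (a ^ 2 * b ^ 2)| ≤ 8 * K / b := by
    rw [abs_div, abs_of_pos (by positivity : 0 < a ^ 2 * b ^ 2), abs_mul,
      div_le_div_iff₀ (by positivity) hb]
    have hsc : |s - 2 * c| ≤ a * K + 2 * a ^ 2 :=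
      (abs_sub _ _).trans (by rw [abs_mul, abs_two]; linarith)
    calc |s| * |s - 2 * c| * b ≤ a * K * (a * K + 2 * a ^ 2) * b := by gcongr
      _ = a ^ 2 * K * (K + 2 * a) * b := by ring
      _ ≤ a ^ 2 * K * (8 * b) * b := by gcongr; linarith
      _ = 8 * K * (a ^ 2 * b ^ 2) := by ring
  have hsecond : |(c / a ^ 2) ^ 2 * ((a - b) * (a + b) / b ^ 2)| ≤ 4 * K / b := by
    have hca : |c / a ^ 2| ≤ 1 := by
      rw [abs_div, abs_of_pos (by positivity : 0 < a ^ 2)]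
      exact div_le_one_of_le₀ hc (by positivity)
    have hsq : |(a - b) * (a + b) / b ^ 2| ≤ 4 * K / b := by
      rw [abs_div, abs_mul, abs_of_pos (by positivity : 0 < a + b),
        abs_of_pos (by positivity : 0 < b ^ 2), div_le_div_iff₀ (by positivity) hb]
      calc |a - b| * (a + b) * b ≤ K * (4 * b) * b := by gcongr; linarith
        _ = 4 * K * b ^ 2 := by ring
    calc |(c / a ^ 2) ^ 2 * ((a - b) * (a + b) / b ^ 2)|
        = |c / a ^ 2| ^ 2 * |(a - b) * (a + b) / b ^ 2| := by rw [abs_mul, abs_pow]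
      _ ≤ 1 ^ 2 * (4 * K / b) := by gcongr
      _ = 4 * K / b := by ring
  rw [split]
  calc _ ≤ _ := abs_add_le _ _
    _ ≤ 8 * K / b + 4 * K / b := add_le_add hfirst hsecond
    _ = 12 * K / b := by ring

theorem stmt11 :
    ∃ C : ℝ, ∀ x k : ℝ × ℝ, x ≠ 0 → x ≠ k → R2norm k / 2 < R2norm (k - x) →
      |cfun x (k - x) ^ 2 / (R2norm x ^ 2 * R2norm (k - x) ^ 2) -
          cfun x (-x) ^ 2 / R2norm x ^ 4| ≤
        C * R2norm k / R2norm (k - x) := by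
  refine ⟨12, fun x k hx _ hk => ?_⟩
  have hb : 0 < R2norm (k - x) := (div_nonneg (R2norm_nonneg k) two_pos.le).trans_lt hk
  have htri : |R2norm x - R2norm (k - x)| ≤ R2norm k := by
    have := abs_R2norm_sub_R2norm_le x (x - k)
    rwa [sub_sub_cancel, R2norm_sub_comm] at this
  rw [cfun_sub_right, cfun_neg_right, neg_sq]
  exact abs_sq_div_sub_sq_div_le (R2norm_pos hx) hb (abs_cfun_le x k)
    (by simpa only [sq] using abs_cfun_le x x) htri (by linarith)
end
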